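/- Fix k ≥ 3 and n ≥ 3k − 6, and let G_{n,k} be the graph formed from the complete bipartite graph K_{n,k} with parts U (|U| = n) and W (|W| = k) by adding three new vertices v₁, v₂, v₃, each adjacent to exactly n − k + 2 vertices of U, such that the sets U \ N(v₁), U \ N(v₂), U \ N(v₃) are pairwise disjoint. Then the sum index of G_{n,k} satisfies S(G_{n,k}) ≤ n + k. -/
import Mathlib


open SimpleGraph

/-- The graph `G_{n,k}`: a complete bipartite graph with parts `U = Fin n` and
`W = Fin k`, together with three extra vertices `v₀, v₁, v₂`, where `vᵢ` is adjacent
exactly to the vertices of `U` in `N i`. -/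
def Gnk (n k : ℕ) (N : Fin 3 → Finset (Fin n)) :
    SimpleGraph (Fin n ⊕ (Fin k ⊕ Fin 3)) :=
  SimpleGraph.fromRel (fun a b =>
    match a, b with
    | Sum.inl _, Sum.inr (Sum.inl _) => True
    | Sum.inl u, Sum.inr (Sum.inr i) => u ∈ N i
    | _, _ => False)

/-- The sum index of a finite simple graph. -/
noncomputable def sumIndex {V : Type*} [Fintype V] (G : SimpleGraph V) : ℕ :=
  sInf {n | ∃ f : V → ℤ, Function.Injective f ∧
    {s : ℤ | ∃ u v, G.Adj u v ∧ s = f u + f v}.ncard = n}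

/-- There is a permutation sending a given triple of distinct elements to
another given triple of distinct elements. -/
lemma exists_perm3 {α : Type*} [DecidableEq α] (a0 a1 a2 b0 b1 b2 : α)
    (ha01 : a0 ≠ a1) (ha02 : a0 ≠ a2) (ha12 : a1 ≠ a2)
    (hb01 : b0 ≠ b1) (hb02 : b0 ≠ b2) (hb12 : b1 ≠ b2) :
    ∃ e : Equiv.Perm α, e a0 = b0 ∧ e a1 = b1 ∧ e a2 = b2 := by
  set e1 : Equiv.Perm α := Equiv.swap a0 b0 with he1
  have h10 : e1 a0 = b0 := Equiv.swap_apply_left _ _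
  have h11 : e1 a1 ≠ b0 := by
    rw [← h10]; exact fun h => ha01.symm (e1.injective h)
  have h12 : e1 a2 ≠ b0 := by
    rw [← h10]; exact fun h => ha02.symm (e1.injective h)
  have h112 : e1 a1 ≠ e1 a2 := fun h => ha12 (e1.injective h)
  set e2 : Equiv.Perm α := Equiv.swap (e1 a1) b1 with he2
  have h20 : e2 b0 = b0 := Equiv.swap_apply_of_ne_of_ne (Ne.symm h11) hb01
  have h21 : e2 (e1 a1) = b1 := Equiv.swap_apply_left _ _
  have h22b0 : e2 (e1 a2) ≠ b0 := by
    rw [← h20]; exact fun h => h12 (e2.injective h)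
  have h22b1 : e2 (e1 a2) ≠ b1 := by
    rw [← h21]; exact fun h => h112.symm (e2.injective h)
  set e3 : Equiv.Perm α := Equiv.swap (e2 (e1 a2)) b2 with he3
  have h30 : e3 b0 = b0 := Equiv.swap_apply_of_ne_of_ne (Ne.symm h22b0) hb02
  have h31 : e3 b1 = b1 := Equiv.swap_apply_of_ne_of_ne (Ne.symm h22b1) hb12
  have h32 : e3 (e2 (e1 a2)) = b2 := Equiv.swap_apply_left _ _
  refine ⟨e1.trans (e2.trans e3), ?_, ?_, ?_⟩
  · simp only [Equiv.trans_apply, h10, h20, h30]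
  · simp only [Equiv.trans_apply, h21, h31]
  · simp only [Equiv.trans_apply, h32]

/-- For `k ≥ 3` and `n ≥ 3k - 6`, if each added vertex of `G_{n,k}` has
exactly `n - k + 2` neighbours in `U` and the non-neighbourhoods in `U` are pairwise
disjoint, then `S(G_{n,k}) ≤ n + k`. -/
theorem stmt17 (n k : ℕ) (hk : 3 ≤ k) (hn : 3 * k ≤ n + 6)
    (N : Fin 3 → Finset (Fin n))
    (hdeg : ∀ i, (N i).card = n - k + 2)
    (hdisj : ∀ i j, i ≠ j → Disjoint (N i)ᶜ (N j)ᶜ) :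
    sumIndex (Gnk n k N) ≤ n + k := by
  have hkn : k ≤ n := by omega
  have hn3 : 3 ≤ n := by omega
  -- each non-neighbourhood is nonempty
  have hcompl : ∀ i, ((N i)ᶜ : Finset (Fin n)).Nonempty := by
    intro i
    rw [← Finset.card_pos, Finset.card_compl, hdeg i]
    simp only [Fintype.card_fin]
    omega
  choose c hc using hcompl
  have hcne : ∀ i j, i ≠ j → c i ≠ c j := by
    intro i j hij hcij
    exact (Finset.disjoint_left.mp (hdisj i j hij)) (hc i) (hcij ▸ hc j)
  obtain ⟨e, he0, he2, he1⟩ := exists_perm3 (c 0) (c 2) (c 1)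
      (⟨0, by omega⟩ : Fin n) ⟨1, by omega⟩ ⟨n - 1, by omega⟩
      (hcne 0 2 (by decide)) (hcne 0 1 (by decide)) (hcne 2 1 (by decide))
      (by simp only [ne_eq, Fin.mk.injEq]; omega)
      (by simp only [ne_eq, Fin.mk.injEq]; omega)
      (by simp only [ne_eq, Fin.mk.injEq]; omega)
  -- the labelling of U
  set g : Fin n → ℤ := fun x => ((e x).val : ℤ) + 1 with hg
  have hginj : Function.Injective g := by
    intro x y hxy
    apply e.injective
    have : ((e x).val : ℤ) = ((e y).val : ℤ) := by
      simp only [hg] at hxy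
      omega
    exact Fin.ext (by exact_mod_cast this)
  have hglb : ∀ x, 1 ≤ g x := by
    intro x
    have : (0 : ℤ) ≤ ((e x).val : ℤ) := Int.natCast_nonneg _
    simp only [hg]
    omega
  have hgub : ∀ x, g x ≤ n := by
    intro x
    have := (e x).isLt
    simp only [hg]
    omega
  have hgc0 : g (c 0) = 1 := by simp [hg, he0]
  have hgc2 : g (c 2) = 2 := by simp [hg, he2]
  have hgc1 : g (c 1) = n := by simp only [hg, he1]; omega
  -- the labelling of the whole graph
  set f : Fin n ⊕ (Fin k ⊕ Fin 3) → ℤ := fun a =>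
    match a with
    | Sum.inl u => g u
    | Sum.inr (Sum.inl w) => (n : ℤ) + 3 + (w.val : ℤ)
    | Sum.inr (Sum.inr i) =>
        if i = 0 then (n : ℤ) + 2 else if i = 1 then (n : ℤ) + 3 + k else (n : ℤ) + 1
    with hf
  have hwlb : ∀ w : Fin k, (0 : ℤ) ≤ (w.val : ℤ) := fun w => by positivity
  have hwub : ∀ w : Fin k, (w.val : ℤ) ≤ (k : ℤ) - 1 := by
    intro w; have := w.isLt; omega
  have hfinj : Function.Injective f := by
    intro a b hab
    rcases a with u | w | i <;> rcases b with u' | w' | i' <;>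
        simp only [hf] at hab
    · exact congrArg _ (hginj hab)
    · exact absurd hab (by have := hgub u; have := hwlb w'; omega)
    · exact absurd hab (by
        have := hgub u
        split_ifs at hab <;> omega)
    · exact absurd hab (by have := hgub u'; have := hwlb w; omega)
    · have : (w.val : ℤ) = (w'.val : ℤ) := by omega
      exact congrArg _ (congrArg _ (Fin.ext (by exact_mod_cast this)))
    · exact absurd hab (by
        have := hwlb w; have := hwub w
        split_ifs at hab <;> omega)
    · exact absurd hab (by
        have := hgub u'
        split_ifs at hab <;> omega)
    · exact absurd hab (by
        have := hwlb w'; have := hwub w'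
        split_ifs at hab <;> omega)
    · congr 2
      by_contra hne
      fin_cases i <;> fin_cases i' <;> simp_all <;> omega
  -- target finset of possible sums
  set T : Finset ℤ :=
    Finset.Icc ((n : ℤ) + 4) (2 * n + k + 2) ∪ {(n : ℤ) + 2} with hT
  have hTcard : T.card ≤ n + k := by
    calc T.card ≤ (Finset.Icc ((n : ℤ) + 4) (2 * n + k + 2)).card + 1 := by
          simpa [hT] using Finset.card_union_le _ _
    _ ≤ n + k := by
          rw [Int.card_Icc]
          omega
  -- every edge sum lies in T
  have hsub : {s : ℤ | ∃ u v, (Gnk n k N).Adj u v ∧ s = f u + f v} ⊆ ↑T := by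
    rintro s ⟨a, b, hadj, rfl⟩
    rw [Gnk, fromRel_adj] at hadj
    obtain ⟨hne, hrel⟩ := hadj
    have hmem : ∀ (u : Fin n) (i : Fin 3), u ∈ N i →
        f (Sum.inl u) + f (Sum.inr (Sum.inr i)) ∈ T := by
      intro u i hu
      have hb1 := hglb u
      have hb2 := hgub u
      have hne' : ∀ j : Fin 3, u ∈ N j → g u ≠ g (c j) := by
        intro j hj hguj
        have : u = c j := hginj hguj
        exact (Finset.mem_compl.mp (hc j)) (this ▸ hj)
      fin_cases i
      · have h1 : g u ≠ 1 := by rw [← hgc0]; exact hne' 0 hu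
        simp only [hf, hT, Finset.mem_union, Finset.mem_Icc, Finset.mem_singleton]
        rw [if_pos (by decide)]
        omega
      · have h1 : g u ≠ (n : ℤ) := by rw [← hgc1]; exact hne' 1 hu
        simp only [hf, hT, Finset.mem_union, Finset.mem_Icc, Finset.mem_singleton]
        rw [if_neg (by decide), if_pos (by decide)]
        omega
      · have h1 : g u ≠ 2 := by rw [← hgc2]; exact hne' 2 hu
        simp only [hf, hT, Finset.mem_union, Finset.mem_Icc, Finset.mem_singleton]
        rw [if_neg (by decide), if_neg (by decide)]
        omega
    have hmemW : ∀ (u : Fin n) (w : Fin k),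
        f (Sum.inl u) + f (Sum.inr (Sum.inl w)) ∈ T := by
      intro u w
      have hb1 := hglb u
      have hb2 := hgub u
      have hb3 := hwlb w
      have hb4 := hwub w
      simp only [hf, hT, Finset.mem_union, Finset.mem_Icc, Finset.mem_singleton]
      omega
    rcases a with u | w | i <;> rcases b with u' | w' | i' <;>
        simp only at hrel
    · simp at hrel
    · exact hmemW u w'
    · exact hmem u i' (by tauto)
    · rw [add_comm]; exact hmemW u' w
    · simp at hrel
    · simp at hrel
    · rw [add_comm]; exact hmem u' i (by tauto)
    · simp at hrel
    · simp at hrel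
  have hncard : {s : ℤ | ∃ u v, (Gnk n k N).Adj u v ∧ s = f u + f v}.ncard ≤ n + k := by
    calc {s : ℤ | ∃ u v, (Gnk n k N).Adj u v ∧ s = f u + f v}.ncard
        ≤ (↑T : Set ℤ).ncard := Set.ncard_le_ncard hsub T.finite_toSet
    _ = T.card := Set.ncard_coe_finset T
    _ ≤ n + k := hTcard
  exact le_trans (Nat.sInf_le ⟨f, hfinj, rfl⟩) hncard
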